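/- In the DEIM index selection algorithm, if the input vectors $v_1, \dots, v_m \in \mathbb{R}^n$ are linearly independent, then at each step $\ell = 2,\dots,m$ the residual $r = v_\ell - V c$ (where $V = [v_1,\dots,v_{\ell-1}]$ and $c$ solves $P^T V c = P^T v_\ell$) is nonzero, and consequently the selected interpolation indices $\rho_1, \dots, \rho_m$ are pairwise distinct. -/
import Mathlib


open Matrix

theorem deim_residual_nonzero_and_new_index {n ℓ : ℕ}
    (v : Fin (ℓ + 1) → (Fin n → ℝ))
    (hli : LinearIndependent ℝ v)
    (ρ : Fin ℓ → Fin n)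
    (V : Matrix (Fin n) (Fin ℓ) ℝ)
    (hV : ∀ (i : Fin n) (j : Fin ℓ), V i j = v j.castSucc i)
    (c : Fin ℓ → ℝ)
    (hc : ∀ i : Fin ℓ, ∑ j : Fin ℓ, V (ρ i) j * c j = v (Fin.last ℓ) (ρ i))
    (res : Fin n → ℝ)
    (hres : res = v (Fin.last ℓ) - V.mulVec c) :
    res ≠ 0 ∧ (∀ i : Fin ℓ, res (ρ i) = 0) ∧
      ∀ ρℓ : Fin n, (∀ j : Fin n, |res j| ≤ |res ρℓ|) →
        ∀ i : Fin ℓ, ρℓ ≠ ρ i := by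
  have hzero : ∀ i : Fin ℓ, res (ρ i) = 0 := by
    intro i
    simp only [hres, Pi.sub_apply, Matrix.mulVec, dotProduct]
    rw [hc i]
    ring
  have hne : res ≠ 0 := by
    intro h0
    have hmem : v (Fin.last ℓ) ∈ Submodule.span ℝ (v '' Set.range Fin.castSucc) := by
      have heq : v (Fin.last ℓ) = ∑ j : Fin ℓ, c j • v j.castSucc := by
        funext i
        have := congrFun h0 i
        simp only [hres, Pi.sub_apply, Pi.zero_apply] at this ⊢
        have h1 : V.mulVec c i = ∑ j : Fin ℓ, c j • v j.castSucc i := by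
          simp only [Matrix.mulVec, dotProduct, hV, smul_eq_mul, mul_comm]
        rw [h1] at this
        have h2 := sub_eq_zero.mp (by linarith [this] : v (Fin.last ℓ) i - ∑ j : Fin ℓ, c j • v j.castSucc i = 0)
        simpa using h2
      rw [heq]
      apply Submodule.sum_mem
      intro j _
      exact Submodule.smul_mem _ _ (Submodule.subset_span ⟨j.castSucc, ⟨j, rfl⟩, rfl⟩)
    exact hli.notMem_span_image (by
      simp only [Set.mem_range, not_exists]
      exact fun j => (Fin.castSucc_lt_last j).ne) hmem
  refine ⟨hne, hzero, ?_⟩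
  intro ρℓ hmax i hcontra
  apply hne
  funext j
  have hρℓ : res ρℓ = 0 := by rw [hcontra]; exact hzero i
  have := hmax j
  rw [hρℓ] at this
  exact abs_nonpos_iff.mp (by simpa using this)
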